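/- Let A ∈ R^{m×n} satisfy the s- and 2s-RIP with constants δ_s ≤ δ_{2s} < 1, let x* be s-sparse with support S*, and let S be an index set with |S| ≤ s. Suppose x⁺ is the minimizer of ‖Ax - y'‖₂ over x supported in S, where ‖A_S^T(y' - Ax*)‖₂ ≤ b₁ and ‖(x*)_{S* \ S}‖₂ ≤ b₂. Then ‖(x⁺)_S - (x*)_S‖₂ ≤ (b₁ + δ_{2s}·b₂)/(1 - δ_s). -/

import Mathlib

/-!
The minimizer `x⁺` satisfies the normal equations `⟪A z, A x⁺ - y'⟫ = 0` for all `z` supported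
in `S`. Write `x⁺ = u + x* - w` with `u = (x⁺ - x*)` on `S` and `w = x*` off `S`; testing the
normal equations against `u` gives `‖A u‖² = ⟪A u, A w⟫ + ⟪u, A_Sᵀ (y' - A x*)⟫`. The `s`-RIP
bounds the left side below by `(1 - δ_s) ‖u‖²`; since `u` and `w` have disjoint supports,
polarization and the `2s`-RIP bound `⟪A u, A w⟫` by `δ_{2s} ‖u‖ ‖w‖`; Cauchy–Schwarz bounds the
last term by `‖u‖ b₁`. Dividing by `‖u‖` gives the claim.
-/

noncomputable def enorm {ι : Type*} [Fintype ι] (v : ι → ℝ) : ℝ := Real.sqrt (∑ i, v i ^ 2)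

def Sparse {n : ℕ} (s : ℕ) (x : Fin n → ℝ) : Prop :=
  ∃ S : Finset (Fin n), S.card ≤ s ∧ ∀ i ∉ S, x i = 0

def RIP {m n : ℕ} (A : Matrix (Fin m) (Fin n) ℝ) (s : ℕ) (δ : ℝ) : Prop :=
  ∀ x : Fin n → ℝ, Sparse s x →
    (1 - δ) * (_root_.enorm x)^2 ≤ (_root_.enorm (A.mulVec x))^2 ∧
      (_root_.enorm (A.mulVec x))^2 ≤ (1 + δ) * (_root_.enorm x)^2

def colSub {m n : ℕ} (A : Matrix (Fin m) (Fin n) ℝ) (S : Finset (Fin n)) :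
    Matrix (Fin m) S ℝ := fun i j => A i (j : Fin n)

open Matrix

lemma le_div_of_mul_sq_le_mul {c N B : ℝ} (hc : 0 < c) (hB : 0 ≤ B) (h : c * N ^ 2 ≤ N * B) :
    N ≤ B / c := by
  rw [le_div_iff₀ hc]
  nlinarith [sq_nonneg (N * c - B)]

section Enorm

variable {ι : Type*} [Fintype ι]

lemma enorm_nonneg (v : ι → ℝ) : 0 ≤ _root_.enorm v := Real.sqrt_nonneg _

lemma enorm_sq (v : ι → ℝ) : _root_.enorm v ^ 2 = v ⬝ᵥ v := by
  rw [_root_.enorm, Real.sq_sqrt (by positivity)]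
  simp only [dotProduct, sq]

lemma eq_zero_of_enorm_eq_zero {v : ι → ℝ} (hv : _root_.enorm v = 0) : v = 0 :=
  dotProduct_self_eq_zero.1 (by rw [← enorm_sq, hv, sq, zero_mul])

lemma enorm_sq_add_smul (a b : ι → ℝ) (t : ℝ) :
    _root_.enorm (a + t • b) ^ 2 = _root_.enorm a ^ 2 + 2 * t * (a ⬝ᵥ b) + t ^ 2 * (b ⬝ᵥ b) := by
  simp only [enorm_sq, add_dotProduct, dotProduct_add, smul_dotProduct, dotProduct_smul,
    smul_eq_mul, dotProduct_comm b a]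
  ring

lemma dotProduct_eq_zero_of_forall_enorm_le {a b : ι → ℝ}
    (h : ∀ t : ℝ, _root_.enorm a ≤ _root_.enorm (a + t • b)) : a ⬝ᵥ b = 0 := by
  have hquad (t : ℝ) : 0 ≤ 2 * t * (a ⬝ᵥ b) + t ^ 2 * (b ⬝ᵥ b) := by
    have := pow_le_pow_left₀ (enorm_nonneg a) (h t) 2
    rw [enorm_sq_add_smul] at this
    linarith
  have hQ : 0 ≤ b ⬝ᵥ b := by rw [← enorm_sq]; positivity
  have key := hquad (-(a ⬝ᵥ b) / (b ⬝ᵥ b + 1))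
  have hpos : 0 < b ⬝ᵥ b + 1 := by linarith
  field_simp at key
  nlinarith [sq_nonneg (a ⬝ᵥ b)]

lemma enorm_eq_sqrt_sum_of_support {u : ι → ℝ} {S : Finset ι} (hu : ∀ i ∉ S, u i = 0) :
    _root_.enorm u = Real.sqrt (∑ i ∈ S, u i ^ 2) := by
  rw [_root_.enorm,
    Finset.sum_subset (Finset.subset_univ S) fun i _ hi => by rw [hu i hi, sq, zero_mul]]

end Enorm

section LeastSquares

variable {κ ι : Type*} [Fintype κ] [Fintype ι] {A : Matrix κ ι ℝ} {S : Finset ι}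

lemma residual_dotProduct_mulVec_eq_zero {y : κ → ℝ} {xp : ι → ℝ}
    (hxpsupp : ∀ i ∉ S, xp i = 0)
    (hxpmin : ∀ z : ι → ℝ, (∀ i ∉ S, z i = 0) →
      _root_.enorm (A *ᵥ xp - y) ≤ _root_.enorm (A *ᵥ z - y))
    {z : ι → ℝ} (hz : ∀ i ∉ S, z i = 0) : (A *ᵥ xp - y) ⬝ᵥ (A *ᵥ z) = 0 := by
  refine dotProduct_eq_zero_of_forall_enorm_le fun t => ?_
  have h := hxpmin (xp + t • z) fun i hi => by simp [hxpsupp i hi, hz i hi]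
  rwa [mulVec_add, mulVec_smul, add_sub_right_comm] at h

end LeastSquares

lemma mulVec_dotProduct_le_enorm_mul_enorm_colSub {m n : ℕ} (A : Matrix (Fin m) (Fin n) ℝ)
    {S : Finset (Fin n)} {u : Fin n → ℝ} (hu : ∀ i ∉ S, u i = 0) (r : Fin m → ℝ) :
    (A *ᵥ u) ⬝ᵥ r ≤ _root_.enorm u * _root_.enorm ((colSub A S)ᵀ *ᵥ r) := by
  have hsum : (A *ᵥ u) ⬝ᵥ r = ∑ i ∈ S, u i * (Aᵀ *ᵥ r) i := by
    rw [dotProduct_comm, dotProduct_mulVec, ← mulVec_transpose, dotProduct_comm, dotProduct,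
      Finset.sum_subset (Finset.subset_univ S) fun i _ hi => by rw [hu i hi, zero_mul]]
  have hrestrict : _root_.enorm ((colSub A S)ᵀ *ᵥ r) = Real.sqrt (∑ i ∈ S, (Aᵀ *ᵥ r) i ^ 2) := by
    rw [_root_.enorm, ← Finset.sum_coe_sort S]
    rfl
  rw [hsum, hrestrict, enorm_eq_sqrt_sum_of_support hu]
  exact Real.sum_mul_le_sqrt_mul_sqrt S u _

namespace RIP

variable {m n k : ℕ} {A : Matrix (Fin m) (Fin n) ℝ} {δ : ℝ} {T : Finset (Fin n)} {x y : Fin n → ℝ}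

lemma two_mul_dotProduct_le (hA : RIP A k δ) (hT : T.card ≤ k) (hx : ∀ i ∉ T, x i = 0)
    (hy : ∀ i ∉ T, y i = 0) (hxy : x ⬝ᵥ y = 0) :
    2 * ((A *ᵥ x) ⬝ᵥ (A *ᵥ y)) ≤ δ * (_root_.enorm x ^ 2 + _root_.enorm y ^ 2) := by
  have hadd := (hA (x + y) ⟨T, hT, fun i hi => by simp [hx i hi, hy i hi]⟩).2
  have hsub := (hA (x - y) ⟨T, hT, fun i hi => by simp [hx i hi, hy i hi]⟩).1
  simp only [enorm_sq, mulVec_add, mulVec_sub, add_dotProduct, dotProduct_add, sub_dotProduct,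
    dotProduct_sub, dotProduct_comm y x, dotProduct_comm (A *ᵥ y) (A *ᵥ x), hxy] at hadd hsub ⊢
  linarith

lemma dotProduct_le (hA : RIP A k δ) (hT : T.card ≤ k) (hx : ∀ i ∉ T, x i = 0)
    (hy : ∀ i ∉ T, y i = 0) (hxy : x ⬝ᵥ y = 0) :
    (A *ᵥ x) ⬝ᵥ (A *ᵥ y) ≤ δ * _root_.enorm x * _root_.enorm y := by
  -- rescaled so that both vectors have norm `‖x‖ * ‖y‖`
  have h := hA.two_mul_dotProduct_le hT (x := _root_.enorm y • x) (y := _root_.enorm x • y)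
    (fun i hi => by simp [hx i hi]) (fun i hi => by simp [hy i hi])
    (by rw [smul_dotProduct, dotProduct_smul, hxy, smul_zero, smul_zero])
  simp only [enorm_sq, mulVec_smul, smul_dotProduct, dotProduct_smul, smul_eq_mul] at h
  rw [← enorm_sq, ← enorm_sq] at h
  rcases (mul_nonneg (enorm_nonneg y) (enorm_nonneg x)).eq_or_lt with hyx | hyx
  · rcases mul_eq_zero.1 hyx.symm with hy0 | hx0
    · rw [hy0, mul_zero, eq_zero_of_enorm_eq_zero hy0, mulVec_zero, dotProduct_zero]
    · rw [hx0, mul_zero, zero_mul, eq_zero_of_enorm_eq_zero hx0, mulVec_zero, zero_dotProduct]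
  · nlinarith

end RIP

lemma Sparse.card_filter_ne_zero_le {n s : ℕ} {x : Fin n → ℝ} (hx : Sparse s x) :
    (Finset.univ.filter fun i => x i ≠ 0).card ≤ s := by
  obtain ⟨S, hS, hxS⟩ := hx
  refine (Finset.card_le_card fun i hi => ?_).trans hS
  by_contra hiS
  simp [hxS i hiS] at hi

lemma RIP.enorm_le_of_dotProduct_residual_eq_zero {m n s : ℕ} {A : Matrix (Fin m) (Fin n) ℝ}
    {δs δ2s : ℝ} (hAs : RIP A s δs) (hA2s : RIP A (2 * s) δ2s) (hδs : δs < 1) (hδ2s : 0 ≤ δ2s)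
    {S T : Finset (Fin n)} (hS : S.card ≤ s) (hT : T.card ≤ s) {u w : Fin n → ℝ} {r : Fin m → ℝ}
    (hu : ∀ i ∉ S, u i = 0) (hw : ∀ i ∉ T, w i = 0) (huw : u ⬝ᵥ w = 0)
    (hres : (A *ᵥ u - A *ᵥ w - r) ⬝ᵥ (A *ᵥ u) = 0) :
    _root_.enorm u ≤ (_root_.enorm ((colSub A S)ᵀ *ᵥ r) + δ2s * _root_.enorm w) / (1 - δs) := by
  have hlower := (hAs u ⟨S, hS, hu⟩).1
  have hcross := hA2s.dotProduct_le (T := S ∪ T) ((Finset.card_union_le _ _).trans (by omega))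
    (fun i hi => hu i (Finset.notMem_union.1 hi).1) (fun i hi => hw i (Finset.notMem_union.1 hi).2)
    huw
  have hdata := mulVec_dotProduct_le_enorm_mul_enorm_colSub A hu r
  refine le_div_of_mul_sq_le_mul (by linarith)
    (add_nonneg (enorm_nonneg _) (mul_nonneg hδ2s (enorm_nonneg _))) ?_
  rw [enorm_sq (A *ᵥ u)] at hlower
  simp only [sub_dotProduct, dotProduct_comm (A *ᵥ w), dotProduct_comm r] at hres
  linarith

open scoped Classical

theorem stmt15 {m n s : ℕ} (A : Matrix (Fin m) (Fin n) ℝ)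
    (δs δ2s : ℝ) (h0 : 0 ≤ δs) (h12 : δs ≤ δ2s) (h2 : δ2s < 1)
    (hRIPs : RIP A s δs) (hRIP2s : RIP A (2 * s) δ2s)
    (xstar : Fin n → ℝ) (hsp : Sparse s xstar)
    (S : Finset (Fin n)) (hS : S.card ≤ s)
    (y' : Fin m → ℝ) (b₁ b₂ : ℝ)
    (hb₁ : _root_.enorm ((colSub A S).transpose.mulVec (y' - A.mulVec xstar)) ≤ b₁)
    (hb₂ : Real.sqrt (∑ i ∈ (Finset.univ.filter fun i => xstar i ≠ 0) \ S, xstar i ^ 2) ≤ b₂)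
    (xp : Fin n → ℝ) (hxpsupp : ∀ i ∉ S, xp i = 0)
    (hxpmin : ∀ z : Fin n → ℝ, (∀ i ∉ S, z i = 0) →
      _root_.enorm (A.mulVec xp - y') ≤ _root_.enorm (A.mulVec z - y')) :
    Real.sqrt (∑ i ∈ S, (xp i - xstar i) ^ 2) ≤ (b₁ + δ2s * b₂) / (1 - δs) := by
  set T := (Finset.univ.filter fun i => xstar i ≠ 0) \ S
  set u : Fin n → ℝ := S.piecewise (xp - xstar) 0
  set w : Fin n → ℝ := S.piecewise 0 xstar
  have hu : ∀ i ∉ S, u i = 0 := fun i hi => by simp [u, hi]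
  have hw : ∀ i ∉ T, w i = 0 := fun i hi => by by_cases hiS : i ∈ S <;> simp_all [w, T]
  have huw : u ⬝ᵥ w = 0 := Finset.sum_eq_zero fun i _ => by by_cases hiS : i ∈ S <;> simp [u, w, hiS]
  have hxp : xp = u + xstar - w := funext fun i => by
    by_cases hiS : i ∈ S <;> simp [u, w, hiS, hxpsupp]
  have hresid : A *ᵥ xp - y' = A *ᵥ u - A *ᵥ w - (y' - A *ᵥ xstar) := by
    rw [hxp, mulVec_sub, mulVec_add]
    abel
  have hres := residual_dotProduct_mulVec_eq_zero hxpsupp hxpmin hu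
  rw [hresid] at hres
  have hwb : _root_.enorm w ≤ b₂ := by
    rw [enorm_eq_sqrt_sum_of_support hw]
    convert hb₂ using 2
    exact Finset.sum_congr rfl fun i hi => by simp [w, (Finset.mem_sdiff.1 hi).2]
  have herr : _root_.enorm u = Real.sqrt (∑ i ∈ S, (xp i - xstar i) ^ 2) := by
    rw [enorm_eq_sqrt_sum_of_support hu]
    exact congrArg _ (Finset.sum_congr rfl fun i hi => by simp [u, hi])
  have hT : T.card ≤ s := (Finset.card_le_card Finset.sdiff_subset).trans hsp.card_filter_ne_zero_le
  rw [← herr]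
  refine (hRIPs.enorm_le_of_dotProduct_residual_eq_zero hRIP2s (h12.trans_lt h2) (h0.trans h12)
    hS hT hu hw huw hres).trans ?_
  gcongr <;> linarith
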